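/- Let F be a nonsingular unsatisfiable hitting clause-set containing an fs-pair {E ∪ {x}, E ∪ {−x}} ⊆ F with E ∉ F, and let F' := (F ∖ {E ∪ {x}, E ∪ {−x}}) ∪ {E}. Then F' is an unsatisfiable hitting clause-set, and every singular DP-sequence from F' that ends in a nonsingular clause-set has length at most 3. -/

import Mathlib

/-- A clause-set: a finite set of finite sets of integers. -/
abbrev Cls := Finset (Finset ℤ)

/-- A clause: a finite set of nonzero integers, clash-free. -/
def IsClause (C : Finset ℤ) : Prop := (0 : ℤ) ∉ C ∧ ∀ x ∈ C, -x ∉ C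

/-- All members are clauses. -/
def IsClauseSet (F : Cls) : Prop := ∀ C ∈ F, IsClause C

/-- Satisfiability: some clause (partial assignment) meets every clause of `F`. -/
def Sat (F : Cls) : Prop := ∃ S : Finset ℤ, IsClause S ∧ ∀ D ∈ F, (S ∩ D).Nonempty

/-- Hitting: any two distinct clauses clash. -/
def Hitting (F : Cls) : Prop := ∀ C ∈ F, ∀ D ∈ F, C ≠ D → ∃ x ∈ C, -x ∈ D

/-- Unsatisfiable hitting clause-set. -/
def UHit (F : Cls) : Prop := IsClauseSet F ∧ Hitting F ∧ ¬ Sat F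

/-- The variables of a clause-set (as absolute values of its literals). -/
def cvar (F : Cls) : Finset ℤ := F.sup (fun C => C.image (fun x => |x|))

/-- Number of variables. -/
def nvar (F : Cls) : ℕ := (cvar F).card

/-- Deficiency: number of clauses minus number of variables. -/
def deficiency (F : Cls) : ℤ := (F.card : ℤ) - (nvar F : ℤ)

/-- Literal degree. -/
def ldeg (F : Cls) (x : ℤ) : ℕ := (F.filter (fun C => x ∈ C)).card

/-- Variable degree. -/
def vdeg (F : Cls) (v : ℤ) : ℕ := ldeg F v + ldeg F (-v)

/-- Singular variable. -/
def SingularVar (F : Cls) (v : ℤ) : Prop :=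
  v ∈ cvar F ∧ min (ldeg F v) (ldeg F (-v)) = 1

/-- Nonsingular clause-set. -/
def Nonsingular (F : Cls) : Prop := ∀ v, ¬ SingularVar F v

/-- Number of singular variables. -/
def nsv (F : Cls) : ℕ :=
  ((cvar F).filter (fun v => min (ldeg F v) (ldeg F (-v)) = 1)).card

/-- Number of 1-singular variables. -/
def nosv (F : Cls) : ℕ :=
  ((cvar F).filter (fun v => min (ldeg F v) (ldeg F (-v)) = 1 ∧ vdeg F v = 2)).card

/-- Number of singular, non-1-singular variables. -/
def nnosv (F : Cls) : ℕ :=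
  ((cvar F).filter (fun v => min (ldeg F v) (ldeg F (-v)) = 1 ∧ vdeg F v ≠ 2)).card

/-- Full subsumption pair: `{E ∪ {x}, E ∪ {-x}}`. -/
def IsFsPair (P : Cls) : Prop :=
  ∃ (E : Finset ℤ) (x : ℤ), IsClause E ∧ x ≠ 0 ∧ x ∉ E ∧ -x ∉ E ∧
    P = {insert x E, insert (-x) E}

/-- Strict fs-resolvability: an fs-pair whose resolvent is not in `F`, and whose
resolution variable occurs in the rest of `F`. -/
def StrictlyFsResolvable (F : Cls) : Prop :=
  ∃ (E : Finset ℤ) (x : ℤ), IsClause E ∧ x ≠ 0 ∧ x ∉ E ∧ -x ∉ E ∧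
    insert x E ∈ F ∧ insert (-x) E ∈ F ∧ E ∉ F ∧
    |x| ∈ cvar (F \ {insert x E, insert (-x) E})

/-- `F'` is an nfs-flip of `F`: an nfs-pair `{E ∪ {x}, E ∪ {-x,y}} ⊆ F` is replaced
by its flipped pair `{E ∪ {x,-y}, E ∪ {y}}`, which must not intersect `F`. -/
def NfsFlip (F F' : Cls) : Prop :=
  ∃ (E : Finset ℤ) (x y : ℤ), IsClause E ∧ x ≠ 0 ∧ y ≠ 0 ∧ |x| ≠ |y| ∧
    x ∉ E ∧ -x ∉ E ∧ y ∉ E ∧ -y ∉ E ∧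
    insert x E ∈ F ∧ insert y (insert (-x) E) ∈ F ∧
    insert (-y) (insert x E) ∉ F ∧ insert y E ∉ F ∧
    F' = (F \ {insert x E, insert y (insert (-x) E)}) ∪
         {insert (-y) (insert x E), insert y E}

/-- Intersection of all clauses of `F` (for nonempty `F`). -/
def bigInter (F : Cls) : Finset ℤ := (F.sup id).filter (fun x => ∀ C ∈ F, x ∈ C)

/-- Clause-factor: a nonempty `F' ⊆ F` whose residue is unsatisfiable. -/
def ClauseFactor (F F' : Cls) : Prop :=
  F'.Nonempty ∧ F' ⊆ F ∧ ¬ Sat (F'.image (fun E => E \ bigInter F'))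

/-- A clause-factor is trivial if it has one clause, or is unsatisfiable and all of `F`. -/
def TrivialFactor (F F' : Cls) : Prop := F'.card = 1 ∨ (¬ Sat F' ∧ F' = F)

/-- Clause-irreducible: every clause-factor is trivial. -/
def ClauseIrreducible (F : Cls) : Prop := ∀ F', ClauseFactor F F' → TrivialFactor F F'

/-- DP-reduction (variable elimination) on variable `v`. -/
def dp (v : ℤ) (F : Cls) : Cls :=
  ((F ×ˢ F).filter (fun p => p.1 ∩ p.2.image (fun x => -x) = {v})).image
    (fun p => (p.1 ∪ p.2) \ {v, -v}) ∪
  F.filter (fun C => v ∉ C ∧ -v ∉ C)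

/-- `x` (or `-x`) occurs in a clause of `F`. -/
def LitIn (F : Cls) (x : ℤ) : Prop := ∃ C ∈ F, x ∈ C ∨ -x ∈ C

/-- Isomorphism of clause-sets. -/
def Iso (F G : Cls) : Prop :=
  ∃ f : ℤ → ℤ, (∀ x, f (-x) = - f x) ∧
    (∀ x y, LitIn F x → LitIn F y → f x = f y → x = y) ∧
    G = F.image (fun C => C.image f)

/-- The clause-set D3. -/
def D3 : Cls := {({1,2,3} : Finset ℤ), {-1,-2,-3}, {-1,2}, {-2,3}, {-3,1}}

/-- Logical equivalence of clause-sets. -/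
def LogEquiv (F G : Cls) : Prop :=
  ∀ S : Finset ℤ, IsClause S →
    ((∀ D ∈ F, (S ∩ D).Nonempty) ↔ (∀ D ∈ G, (S ∩ D).Nonempty))


/-!
The argument counts literals of literal-degree one. The basic tool is that a total assignment
falsifies exactly one clause `W` of a UHIT, and that flipping a literal `z ∈ W` moves the
falsified clause to one containing `-z`; in particular every literal of a variable occurs.

If `y` has degree one and occurs in `C`, then `C ∖ {y}` is contained in every clause
containing `-y`, so DP-reduction on `|y|` just deletes `C` and removes `-y` from the other
clauses. The result is again a UHIT in which `y` no longer has degree one, and a literal can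
newly acquire degree one only if it lies in `C` and had degree two, i.e. occurred exactly in
`C` and in the unique clause containing `-y`; then `-y` loses degree one as well. Two distinct
literals never occur in exactly the same two clauses of a UHIT, so each singular DP-step lowers
the number of degree-one literals. In the fs-resolvent of a nonsingular UHIT only `x`, `-x` and
at most one literal of `E` (of degree two in `F`) have degree one.
-/

open Finset

lemma mem_image_neg {s : Finset ℤ} {u : ℤ} : u ∈ s.image (fun x => -x) ↔ -u ∈ s := by
  simp [neg_eq_iff_eq_neg]

namespace IsClause

variable {C D : Finset ℤ}

lemma ne_zero (hC : IsClause C) {a : ℤ} (ha : a ∈ C) : a ≠ 0 :=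
  fun h => hC.1 (h ▸ ha)

lemma mono (hD : IsClause D) (h : C ⊆ D) : IsClause C :=
  ⟨fun h0 => hD.1 (h h0), fun x hx hnx => hD.2 x (h hx) (h hnx)⟩

lemma image_neg (hC : IsClause C) : IsClause (C.image fun x => -x) :=
  ⟨fun h => hC.1 (by simpa using mem_image_neg.1 h),
    fun x hx hnx => hC.2 (-x) (mem_image_neg.1 hx) (by simpa using mem_image_neg.1 hnx)⟩

lemma insert (hC : IsClause C) {a : ℤ} (ha : a ≠ 0) (hna : -a ∉ C) : IsClause (insert a C) := by
  refine ⟨by simp [hC.1, Ne.symm ha], fun u hu hnu => ?_⟩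
  rcases mem_insert.1 hu with rfl | hu <;> rcases mem_insert.1 hnu with h | hnu
  · omega
  · exact hna hnu
  · exact hna (by rwa [← h, neg_neg])
  · exact hC.2 u hu hnu

end IsClause

def setTrue (z : ℤ) (S : Finset ℤ) : Finset ℤ := insert z (S.erase (-z))

lemma mem_setTrue {z u : ℤ} {S : Finset ℤ} : u ∈ setTrue z S ↔ u = z ∨ (u ≠ -z ∧ u ∈ S) := by
  simp [setTrue]

lemma IsClause.setTrue {S : Finset ℤ} (hS : IsClause S) {z : ℤ} (hz : z ≠ 0) :
    IsClause (setTrue z S) :=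
  (hS.mono (erase_subset _ _)).insert hz (notMem_erase _ _)

def IsTotalAssignment (G : Cls) (S : Finset ℤ) : Prop :=
  IsClause S ∧ ∀ W ∈ G, ∀ u ∈ W, u ∈ S ∨ -u ∈ S

lemma mem_cvar {G : Cls} {C : Finset ℤ} {u : ℤ} (hC : C ∈ G) (hu : u ∈ C) : |u| ∈ cvar G :=
  mem_sup.2 ⟨C, hC, mem_image_of_mem _ hu⟩

lemma pos_of_mem_cvar {G : Cls} (hG : IsClauseSet G) {v : ℤ} (hv : v ∈ cvar G) : 0 < v := by
  obtain ⟨C, hC, hv⟩ := mem_sup.1 hv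
  obtain ⟨u, hu, rfl⟩ := mem_image.1 hv
  exact abs_pos.2 ((hG C hC).ne_zero hu)

lemma exists_isTotalAssignment_superset {G : Cls} (hG : IsClauseSet G) {T : Finset ℤ}
    (hT : IsClause T) : ∃ S, T ⊆ S ∧ IsTotalAssignment G S := by
  have hpos : ∀ v ∈ cvar G, 0 < v := fun v hv => pos_of_mem_cvar hG hv
  refine ⟨T ∪ (cvar G).filter (fun v => -v ∉ T), subset_union_left, ⟨?_, ?_⟩, ?_⟩
  · simp only [mem_union, mem_filter, not_or, not_and]
    exact ⟨hT.1, fun h => absurd (hpos 0 h) (lt_irrefl 0)⟩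
  · intro u hu hnu
    simp only [mem_union, mem_filter, neg_neg] at hu hnu
    rcases hu with hu | ⟨hu, hu'⟩ <;> rcases hnu with hnu | ⟨hnu, hnu'⟩
    · exact hT.2 u hu hnu
    · exact hnu' hu
    · exact hu' hnu
    · have := hpos _ hu; have := hpos _ hnu; omega
  · intro W hW u hu
    have hv : |u| ∈ T ∪ (cvar G).filter (fun v => -v ∉ T) ∨
        -|u| ∈ T ∪ (cvar G).filter (fun v => -v ∉ T) := by
      by_cases h : -|u| ∈ T
      · exact Or.inr (mem_union_left _ h)
      · exact Or.inl (mem_union_right _ (mem_filter.2 ⟨mem_cvar hW hu, h⟩))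
    rcases abs_choice u with h | h <;> rw [h] at hv
    · exact hv
    · rwa [neg_neg, or_comm] at hv

lemma exists_isTotalAssignment_disjoint {G : Cls} (hG : IsClauseSet G) {T W : Finset ℤ}
    (hT : IsClause T) (hTW : ∀ u ∈ W, -u ∈ T) :
    ∃ S, T ⊆ S ∧ IsTotalAssignment G S ∧ Disjoint S W := by
  obtain ⟨S, hTS, hS⟩ := exists_isTotalAssignment_superset hG hT
  exact ⟨S, hTS, hS, disjoint_left.2 fun u huS huW => hS.1.2 u huS (hTS (hTW u huW))⟩

section Degrees

variable {G : Cls} {A B C W : Finset ℤ} {z : ℤ}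

lemma ldeg_pos_iff : 0 < ldeg G z ↔ ∃ W ∈ G, z ∈ W := by
  simp [ldeg, card_pos, filter_nonempty_iff]

lemma ldeg_insert (hC : C ∉ G) (z : ℤ) :
    ldeg (insert C G) z = ldeg G z + if z ∈ C then 1 else 0 := by
  unfold ldeg
  rw [filter_insert]
  split_ifs
  · exact card_insert_of_notMem fun h => hC (mem_filter.1 h).1
  · rfl

lemma ldeg_erase (hC : C ∈ G) (z : ℤ) :
    ldeg G z = ldeg (G.erase C) z + if z ∈ C then 1 else 0 := by
  conv_lhs => rw [← insert_erase hC]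
  exact ldeg_insert (notMem_erase C G) z

lemma eq_of_ldeg_eq_one (hz : ldeg G z = 1) (hA : A ∈ G) (hzA : z ∈ A) (hB : B ∈ G)
    (hzB : z ∈ B) : A = B :=
  card_le_one.1 hz.le A (mem_filter.2 ⟨hA, hzA⟩) B (mem_filter.2 ⟨hB, hzB⟩)

lemma eq_or_eq_of_ldeg_eq_two (hz : ldeg G z = 2) (hA : A ∈ G) (hzA : z ∈ A) (hB : B ∈ G)
    (hzB : z ∈ B) (hAB : A ≠ B) (hW : W ∈ G) (hzW : z ∈ W) : W = A ∨ W = B := by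
  have hpair : ({A, B} : Cls) = G.filter (z ∈ ·) := by
    refine eq_of_subset_of_card_le ?_ (by rw [card_pair hAB]; exact hz.le)
    intro V hV
    rcases mem_insert.1 hV with rfl | hV
    · exact mem_filter.2 ⟨hA, hzA⟩
    · rw [mem_singleton.1 hV]; exact mem_filter.2 ⟨hB, hzB⟩
  have hWAB : W ∈ ({A, B} : Cls) := hpair ▸ mem_filter.2 ⟨hW, hzW⟩
  simpa using hWAB

end Degrees

namespace UHit

variable {G : Cls} {A B C S W : Finset ℤ} {z : ℤ}

lemma exists_disjoint (hU : UHit G) (hS : IsClause S) : ∃ W ∈ G, Disjoint S W := by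
  by_contra h
  push Not at h
  exact hU.2.2 ⟨S, hS, fun W hW => by simpa [Finset.not_disjoint_iff_nonempty_inter] using h W hW⟩

lemma eq_of_disjoint (hU : UHit G) (hS : IsTotalAssignment G S) {W₁ W₂ : Finset ℤ}
    (hW₁ : W₁ ∈ G) (hW₂ : W₂ ∈ G) (h₁ : Disjoint S W₁) (h₂ : Disjoint S W₂) : W₁ = W₂ := by
  by_contra hne
  obtain ⟨u, hu, hnu⟩ := hU.2.1 W₁ hW₁ W₂ hW₂ hne
  rcases hS.2 W₁ hW₁ u hu with h | h
  · exact disjoint_left.1 h₁ h hu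
  · exact disjoint_left.1 h₂ h hnu

lemma exists_neg_mem_disjoint_setTrue (hU : UHit G) (hS : IsTotalAssignment G S) (hW : W ∈ G)
    (hSW : Disjoint S W) (hz : z ∈ W) : ∃ W' ∈ G, -z ∈ W' ∧ Disjoint (setTrue z S) W' := by
  obtain ⟨W', hW', hdisj⟩ := hU.exists_disjoint (hS.1.setTrue ((hU.1 W hW).ne_zero hz))
  refine ⟨W', hW', by_contra fun hzW' => ?_, hdisj⟩
  have hSW' : Disjoint S W' := disjoint_left.2 fun u huS huW' =>
    disjoint_left.1 hdisj (mem_setTrue.2 (Or.inr ⟨fun h => hzW' (h ▸ huW'), huS⟩)) huW'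
  obtain rfl := hU.eq_of_disjoint hS hW' hW hSW' hSW
  exact disjoint_left.1 hdisj (mem_setTrue.2 (Or.inl rfl)) hz

lemma ldeg_neg_pos (hU : UHit G) (hC : C ∈ G) (hz : z ∈ C) : 0 < ldeg G (-z) := by
  obtain ⟨S, -, hS, hSC⟩ := exists_isTotalAssignment_disjoint hU.1 (hU.1 C hC).image_neg
    (fun u hu => mem_image_neg.2 (by rwa [neg_neg]))
  obtain ⟨W, hW, hzW, -⟩ := hU.exists_neg_mem_disjoint_setTrue hS hC hSC hz
  exact ldeg_pos_iff.2 ⟨W, hW, hzW⟩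

lemma two_le_ldeg (hU : UHit G) (hns : Nonsingular G) (hW : W ∈ G) (hz : z ∈ W) :
    2 ≤ ldeg G z := by
  have h₁ : 0 < ldeg G z := ldeg_pos_iff.2 ⟨W, hW, hz⟩
  have h₂ : 0 < ldeg G (-z) := hU.ldeg_neg_pos hW hz
  by_contra h
  refine hns |z| ⟨mem_cvar hW hz, ?_⟩
  rcases abs_choice z with h' | h' <;> rw [h']
  · omega
  · rw [neg_neg]; omega

lemma card_filter_ldeg_eq_two_le_one (hU : UHit G) (hA : A ∈ G) (hB : B ∈ G) (hAB : A ≠ B) :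
    ((A ∩ B).filter (fun z => ldeg G z = 2)).card ≤ 1 := by
  refine card_le_one.2 fun z₁ hz₁ z₂ hz₂ => by_contra fun hne => ?_
  simp only [mem_filter, mem_inter] at hz₁ hz₂
  have hboth : ∀ V ∈ G, z₁ ∈ V ∨ z₂ ∈ V → z₁ ∈ V ∧ z₂ ∈ V := by
    rintro V hV (h | h)
    · rcases eq_or_eq_of_ldeg_eq_two hz₁.2 hA hz₁.1.1 hB hz₁.1.2 hAB hV h with rfl | rfl
      exacts [⟨hz₁.1.1, hz₂.1.1⟩, ⟨hz₁.1.2, hz₂.1.2⟩]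
    · rcases eq_or_eq_of_ldeg_eq_two hz₂.2 hA hz₂.1.1 hB hz₂.1.2 hAB hV h with rfl | rfl
      exacts [⟨hz₁.1.1, hz₂.1.1⟩, ⟨hz₁.1.2, hz₂.1.2⟩]
  -- Falsify `A` and flip `z₁`, resp. `z₂`: the clauses reached contain neither literal, so the
  -- variable on which they clash is not assigned by the original assignment.
  obtain ⟨S, hAS, hS, hSA⟩ := exists_isTotalAssignment_disjoint hU.1 (hU.1 A hA).image_neg
    (fun u hu => mem_image_neg.2 (by rwa [neg_neg]))
  have hneg : ∀ u ∈ A, -u ∈ S := fun u hu => hAS (mem_image_neg.2 (by rwa [neg_neg]))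
  obtain ⟨W₁, hW₁, hnz₁, hdisj₁⟩ := hU.exists_neg_mem_disjoint_setTrue hS hA hSA hz₁.1.1
  obtain ⟨W₂, hW₂, hnz₂, hdisj₂⟩ := hU.exists_neg_mem_disjoint_setTrue hS hA hSA hz₂.1.1
  have hz₁W₁ : z₁ ∉ W₁ := disjoint_left.1 hdisj₁ (mem_setTrue.2 (Or.inl rfl))
  have hz₂W₂ : z₂ ∉ W₂ := disjoint_left.1 hdisj₂ (mem_setTrue.2 (Or.inl rfl))
  have hz₂W₁ : z₂ ∉ W₁ := fun h => hz₁W₁ (hboth W₁ hW₁ (Or.inr h)).1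
  have hz₁W₂ : z₁ ∉ W₂ := fun h => hz₂W₂ (hboth W₂ hW₂ (Or.inl h)).2
  have hW₁₂ : W₁ ≠ W₂ := by
    rintro rfl
    exact disjoint_left.1 hdisj₂
      (mem_setTrue.2 (Or.inr ⟨neg_inj.not.2 hne, hneg z₁ hz₁.1.1⟩)) hnz₁
  obtain ⟨u, hu, hnu⟩ := hU.2.1 W₁ hW₁ W₂ hW₂ hW₁₂
  rcases hS.2 W₁ hW₁ u hu with h | h
  · refine disjoint_left.1 hdisj₁ (mem_setTrue.2 (Or.inr ⟨?_, h⟩)) hu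
    rintro rfl
    exact hz₁W₂ (by rwa [neg_neg] at hnu)
  · refine disjoint_left.1 hdisj₂ (mem_setTrue.2 (Or.inr ⟨?_, h⟩)) hnu
    intro h'
    exact hz₂W₁ (neg_inj.1 h' ▸ hu)

end UHit

lemma inter_image_neg_eq_singleton_neg {P Q : Finset ℤ} {w : ℤ}
    (h : P ∩ Q.image (fun x => -x) = {w}) : Q ∩ P.image (fun x => -x) = {-w} := by
  ext u
  have hu := Finset.ext_iff.1 h (-u)
  simp only [mem_inter, mem_image_neg, neg_neg, mem_singleton] at hu ⊢
  rw [and_comm, hu, neg_eq_iff_eq_neg]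

lemma dp_neg (v : ℤ) (G : Cls) : dp (-v) G = dp v G := by
  have hpair : ({-v, v} : Finset ℤ) = {v, -v} := pair_comm _ _
  ext Z
  simp only [dp, neg_neg, hpair, mem_union, mem_image, mem_filter, mem_product, Prod.exists]
  constructor
  · rintro (⟨P, Q, ⟨⟨hP, hQ⟩, h⟩, rfl⟩ | ⟨hZ, h₁, h₂⟩)
    · exact Or.inl ⟨Q, P, ⟨⟨hQ, hP⟩, by simpa using inter_image_neg_eq_singleton_neg h⟩,
        by rw [union_comm]⟩
    · exact Or.inr ⟨hZ, h₂, h₁⟩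
  · rintro (⟨P, Q, ⟨⟨hP, hQ⟩, h⟩, rfl⟩ | ⟨hZ, h₁, h₂⟩)
    · exact Or.inl ⟨Q, P, ⟨⟨hQ, hP⟩, inter_image_neg_eq_singleton_neg h⟩, by rw [union_comm]⟩
    · exact Or.inr ⟨hZ, h₂, h₁⟩

lemma resolvent_eq_erase {C D : Finset ℤ} {y : ℤ} (hCD : C.erase y ⊆ D) (hyD : y ∉ D) :
    (C ∪ D) \ {y, -y} = D.erase (-y) := by
  ext u
  simp only [mem_sdiff, mem_union, mem_insert, mem_singleton, mem_erase, not_or]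
  constructor
  · rintro ⟨hu | hu, huy, huny⟩
    · exact ⟨huny, hCD (mem_erase.2 ⟨huy, hu⟩)⟩
    · exact ⟨huny, hu⟩
  · rintro ⟨huny, hu⟩
    exact ⟨Or.inr hu, fun h => hyD (h ▸ hu), huny⟩

def degOneLits (G : Cls) : Finset ℤ := (G.biUnion id).filter (fun z => ldeg G z = 1)

lemma mem_degOneLits {G : Cls} {z : ℤ} : z ∈ degOneLits G ↔ ldeg G z = 1 := by
  refine ⟨fun h => (mem_filter.1 h).2, fun h => mem_filter.2 ⟨?_, h⟩⟩
  obtain ⟨W, hW, hzW⟩ := ldeg_pos_iff.1 (h ▸ Nat.one_pos)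
  exact mem_biUnion.2 ⟨W, hW, hzW⟩

namespace UHit

variable {G : Cls} {C D : Finset ℤ} {y z : ℤ}

lemma erase_subset_of_ldeg_eq_one (hU : UHit G) (hy : ldeg G y = 1) (hC : C ∈ G) (hyC : y ∈ C)
    (hD : D ∈ G) (hyD : -y ∈ D) : C.erase y ⊆ D := by
  intro w hw
  by_contra hwD
  obtain ⟨hwy, hwC⟩ := mem_erase.1 hw
  -- a total assignment falsifying `D` and satisfying `w`; flipping `-y` must reach `C`
  have hT : IsClause (insert w (D.image fun x => -x)) :=
    (hU.1 D hD).image_neg.insert ((hU.1 C hC).ne_zero hwC) (by rwa [mem_image_neg, neg_neg])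
  obtain ⟨S, hTS, hS, hSD⟩ := exists_isTotalAssignment_disjoint hU.1 hT
    (fun u hu => mem_insert_of_mem (mem_image_neg.2 (by rwa [neg_neg])))
  obtain ⟨W, hW, hyW, hdisj⟩ := hU.exists_neg_mem_disjoint_setTrue hS hD hSD hyD
  rw [neg_neg] at hyW
  obtain rfl := eq_of_ldeg_eq_one hy hW hyW hC hyC
  exact disjoint_left.1 hdisj
    (mem_setTrue.2 (Or.inr ⟨by rwa [neg_neg], hTS (mem_insert_self _ _)⟩)) hwC

lemma dp_eq_image_erase (hU : UHit G) (hy : ldeg G y = 1) (hC : C ∈ G) (hyC : y ∈ C) :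
    dp y G = (G.erase C).image (fun W => W.erase (-y)) := by
  have hres : ∀ D ∈ G, -y ∈ D → (C ∪ D) \ {y, -y} = D.erase (-y) := fun D hD hyD =>
    resolvent_eq_erase (hU.erase_subset_of_ldeg_eq_one hy hC hyC hD hyD)
      (fun h => (hU.1 D hD).2 y h hyD)
  ext Z
  simp only [dp, mem_union, mem_image, mem_filter, mem_product, mem_erase, Prod.exists]
  constructor
  · rintro (⟨P, Q, ⟨⟨hP, hQ⟩, hPQ⟩, rfl⟩ | ⟨hZ, hyZ, hnyZ⟩)
    · have hy' : y ∈ P ∩ Q.image (fun x => -x) := hPQ ▸ mem_singleton_self y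
      rw [mem_inter, mem_image_neg] at hy'
      obtain rfl := eq_of_ldeg_eq_one hy hP hy'.1 hC hyC
      exact ⟨Q, ⟨fun hQC => (hU.1 P hP).2 y hy'.1 (hQC ▸ hy'.2), hQ⟩, (hres Q hQ hy'.2).symm⟩
    · exact ⟨Z, ⟨fun h => hyZ (h ▸ hyC), hZ⟩, erase_eq_of_notMem hnyZ⟩
  · rintro ⟨W, ⟨hWC, hW⟩, rfl⟩
    by_cases hyW : -y ∈ W
    · refine Or.inl ⟨C, W, ⟨⟨hC, hW⟩, ?_⟩, hres W hW hyW⟩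
      ext u
      simp only [mem_inter, mem_image_neg, mem_singleton]
      refine ⟨fun ⟨huC, hu⟩ => by_contra fun huy => ?_, by rintro rfl; exact ⟨hyC, hyW⟩⟩
      exact (hU.1 W hW).2 u (hU.erase_subset_of_ldeg_eq_one hy hC hyC hW hyW
        (mem_erase.2 ⟨huy, huC⟩)) hu
    · rw [erase_eq_of_notMem hyW]
      exact Or.inr ⟨hW, fun h => hWC (eq_of_ldeg_eq_one hy hW h hC hyC), hyW⟩

lemma exists_clash_erase (hU : UHit G) (hy : ldeg G y = 1) (hC : C ∈ G) (hyC : y ∈ C)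
    {W₁ W₂ : Finset ℤ} (hW₁ : W₁ ∈ G.erase C) (hW₂ : W₂ ∈ G.erase C) (hne : W₁ ≠ W₂) :
    ∃ u ∈ W₁.erase (-y), -u ∈ W₂.erase (-y) := by
  obtain ⟨hW₁C, hW₁⟩ := mem_erase.1 hW₁
  obtain ⟨hW₂C, hW₂⟩ := mem_erase.1 hW₂
  obtain ⟨u, hu, hnu⟩ := hU.2.1 W₁ hW₁ W₂ hW₂ hne
  refine ⟨u, mem_erase.2 ⟨?_, hu⟩, mem_erase.2 ⟨?_, hnu⟩⟩
  · rintro rfl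
    exact hW₂C (eq_of_ldeg_eq_one hy hW₂ (by rwa [neg_neg] at hnu) hC hyC)
  · intro h
    exact hW₁C (eq_of_ldeg_eq_one hy hW₁ (neg_inj.1 h ▸ hu) hC hyC)

lemma injOn_erase (hU : UHit G) (hy : ldeg G y = 1) (hC : C ∈ G) (hyC : y ∈ C) :
    Set.InjOn (fun W : Finset ℤ => W.erase (-y)) ↑(G.erase C) := by
  intro W₁ hW₁ W₂ hW₂ h
  by_contra hne
  obtain ⟨u, hu, hnu⟩ := hU.exists_clash_erase hy hC hyC hW₁ hW₂ hne
  rw [← show W₁.erase (-y) = W₂.erase (-y) from h] at hnu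
  exact (hU.1 W₁ (mem_erase.1 hW₁).2).2 u (mem_of_mem_erase hu) (mem_of_mem_erase hnu)

lemma dp_of_ldeg_eq_one (hU : UHit G) (hy : ldeg G y = 1) : UHit (dp y G) := by
  obtain ⟨C, hC, hyC⟩ := ldeg_pos_iff.1 (hy ▸ Nat.one_pos)
  rw [hU.dp_eq_image_erase hy hC hyC]
  refine ⟨fun _ h => ?_, fun _ h₁ _ h₂ hne => ?_, fun ⟨S, hS, hmeet⟩ => ?_⟩
  · obtain ⟨W, hW, rfl⟩ := mem_image.1 h
    exact (hU.1 W (mem_of_mem_erase hW)).mono (erase_subset _ _)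
  · obtain ⟨W₁, hW₁, rfl⟩ := mem_image.1 h₁
    obtain ⟨W₂, hW₂, rfl⟩ := mem_image.1 h₂
    exact hU.exists_clash_erase hy hC hyC hW₁ hW₂ (by rintro rfl; exact hne rfl)
  · obtain ⟨W, hW, hdisj⟩ := hU.exists_disjoint (hS.setTrue ((hU.1 C hC).ne_zero hyC))
    have hWC : W ≠ C := by
      rintro rfl
      exact disjoint_left.1 hdisj (mem_setTrue.2 (Or.inl rfl)) hyC
    obtain ⟨u, hu⟩ := hmeet _ (mem_image_of_mem _ (mem_erase.2 ⟨hWC, hW⟩))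
    obtain ⟨huS, huW⟩ := mem_inter.1 hu
    obtain ⟨huy, huW⟩ := mem_erase.1 huW
    exact disjoint_left.1 hdisj (mem_setTrue.2 (Or.inr ⟨huy, huS⟩)) huW

lemma ldeg_dp (hU : UHit G) (hy : ldeg G y = 1) (hC : C ∈ G) (hyC : y ∈ C) (hz : z ≠ -y) :
    ldeg (dp y G) z = ldeg (G.erase C) z := by
  rw [hU.dp_eq_image_erase hy hC hyC]
  unfold ldeg
  rw [filter_image, card_image_of_injOn
    ((hU.injOn_erase hy hC hyC).mono (coe_subset.2 (filter_subset _ _)))]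
  exact congrArg card (filter_congr fun W _ => by simp [hz])

lemma ldeg_neg_eq_one_of_ldeg_eq_two (hU : UHit G) (hy : ldeg G y = 1) (hC : C ∈ G)
    (hyC : y ∈ C) (hz : z ∈ C.erase y) (hz₂ : ldeg G z = 2) : ldeg G (-y) = 1 := by
  have hsub : insert C (G.filter (-y ∈ ·)) ⊆ G.filter (z ∈ ·) := by
    intro W hW
    rcases mem_insert.1 hW with rfl | hW
    · exact mem_filter.2 ⟨hC, mem_of_mem_erase hz⟩
    · obtain ⟨hW, hyW⟩ := mem_filter.1 hW
      exact mem_filter.2 ⟨hW, hU.erase_subset_of_ldeg_eq_one hy hC hyC hW hyW hz⟩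
  have hC' : C ∉ G.filter (-y ∈ ·) := fun h => (hU.1 C hC).2 y hyC (mem_filter.1 h).2
  have hle := card_le_card hsub
  rw [card_insert_of_notMem hC'] at hle
  have hpos := hU.ldeg_neg_pos hC hyC
  unfold ldeg at *
  omega

lemma degOneLits_dp_subset (hU : UHit G) (hy : ldeg G y = 1) (hC : C ∈ G) (hyC : y ∈ C) :
    degOneLits (dp y G) ⊆
      ((degOneLits G).erase y).erase (-y) ∪ (C.erase y).filter (fun z => ldeg G z = 2) := by
  intro z hz
  rw [mem_degOneLits] at hz
  obtain ⟨W', hW', hzW'⟩ := ldeg_pos_iff.1 (hz ▸ Nat.one_pos)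
  rw [hU.dp_eq_image_erase hy hC hyC] at hW'
  obtain ⟨W, hW, rfl⟩ := mem_image.1 hW'
  obtain ⟨hzny, hzW⟩ := mem_erase.1 hzW'
  have hzy : z ≠ y := by
    rintro rfl
    exact (mem_erase.1 hW).1 (eq_of_ldeg_eq_one hy (mem_of_mem_erase hW) hzW hC hyC)
  have hdeg := ldeg_erase hC z
  rw [← hU.ldeg_dp hy hC hyC hzny, hz] at hdeg
  by_cases hzC : z ∈ C
  · rw [if_pos hzC] at hdeg
    exact mem_union_right _ (mem_filter.2 ⟨mem_erase.2 ⟨hzy, hzC⟩, hdeg⟩)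
  · rw [if_neg hzC] at hdeg
    exact mem_union_left _ (mem_erase.2 ⟨hzny, mem_erase.2 ⟨hzy, mem_degOneLits.2 hdeg⟩⟩)

lemma card_degOneLits_dp_lt (hU : UHit G) (hy : ldeg G y = 1) :
    (degOneLits (dp y G)).card < (degOneLits G).card := by
  obtain ⟨C, hC, hyC⟩ := ldeg_pos_iff.1 (hy ▸ Nat.one_pos)
  refine ((card_le_card (hU.degOneLits_dp_subset hy hC hyC)).trans
    (card_union_le _ _)).trans_lt ?_
  set L := degOneLits G
  set N := (C.erase y).filter (fun z => ldeg G z = 2)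
  have hyL : y ∈ L := mem_degOneLits.2 hy
  rcases N.eq_empty_or_nonempty with hN | ⟨z, hz⟩
  · rw [hN, card_empty, add_zero]
    exact card_erase_le.trans_lt (card_erase_lt_of_mem hyL)
  obtain ⟨hzC, hz₂⟩ := mem_filter.1 hz
  have hny := hU.ldeg_neg_eq_one_of_ldeg_eq_two hy hC hyC hzC hz₂
  obtain ⟨D, hD, hyD⟩ := ldeg_pos_iff.1 (hny ▸ Nat.one_pos)
  have hCD : C ≠ D := by
    rintro rfl
    exact (hU.1 C hC).2 y hyC hyD
  have hND : N ⊆ (C ∩ D).filter (fun z => ldeg G z = 2) := fun z hz => by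
    obtain ⟨hzC, hz₂⟩ := mem_filter.1 hz
    exact mem_filter.2 ⟨mem_inter.2 ⟨mem_of_mem_erase hzC,
      hU.erase_subset_of_ldeg_eq_one hy hC hyC hD hyD hzC⟩, hz₂⟩
  have hN₁ := (card_le_card hND).trans (hU.card_filter_ldeg_eq_two_le_one hC hD hCD)
  have hy₀ := (hU.1 C hC).ne_zero hyC
  have hnyL : -y ∈ L.erase y := mem_erase.2 ⟨by omega, mem_degOneLits.2 hny⟩
  have h₁ := card_erase_add_one hnyL
  have h₂ := card_erase_add_one hyL
  omega

lemma dp_of_singularVar (hU : UHit G) {v : ℤ} (hv : SingularVar G v) :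
    UHit (dp v G) ∧ (degOneLits (dp v G)).card < (degOneLits G).card := by
  obtain ⟨y, hvy, hy⟩ : ∃ y, dp v G = dp y G ∧ ldeg G y = 1 := by
    rcases min_choice (ldeg G v) (ldeg G (-v)) with h | h
    · exact ⟨v, rfl, h ▸ hv.2⟩
    · exact ⟨-v, (dp_neg v G).symm, h ▸ hv.2⟩
  rw [hvy]
  exact ⟨hU.dp_of_ldeg_eq_one hy, hU.card_degOneLits_dp_lt hy⟩

end UHit

def IsSingularDPSeq (Fs : ℕ → Cls) (m : ℕ) : Prop :=
  ∀ i < m, ∃ v, SingularVar (Fs i) v ∧ Fs (i + 1) = dp v (Fs i)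

theorem IsSingularDPSeq.length_le_card_degOneLits {Fs : ℕ → Cls} {m : ℕ}
    (hFs : IsSingularDPSeq Fs m) (hU : UHit (Fs 0)) : m ≤ (degOneLits (Fs 0)).card := by
  have key : ∀ i ≤ m, UHit (Fs i) ∧ (degOneLits (Fs i)).card + i ≤ (degOneLits (Fs 0)).card := by
    intro i hi
    induction i with
    | zero => exact ⟨hU, le_rfl⟩
    | succ i ih =>
      obtain ⟨hUi, hcard⟩ := ih (by omega)
      obtain ⟨v, hv, hnext⟩ := hFs i (by omega)
      obtain ⟨hU', hlt⟩ := hUi.dp_of_singularVar hv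
      rw [hnext]
      exact ⟨hU', by omega⟩
  have := (key m le_rfl).2
  omega

def fsResolve (F : Cls) (E : Finset ℤ) (x : ℤ) : Cls := (F \ {insert x E, insert (-x) E}) ∪ {E}

section FsResolve

variable {F : Cls} {D E : Finset ℤ} {x : ℤ}

namespace UHit

lemma exists_neg_mem_of_fsPair (hU : UHit F) (h₁ : insert x E ∈ F) (h₂ : insert (-x) E ∈ F)
    (hD : D ∈ F) (hD₁ : D ≠ insert x E) (hD₂ : D ≠ insert (-x) E) : ∃ u ∈ E, -u ∈ D := by
  obtain ⟨u, hu, hnu⟩ := hU.2.1 _ h₁ D hD (Ne.symm hD₁)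
  obtain ⟨w, hw, hnw⟩ := hU.2.1 _ h₂ D hD (Ne.symm hD₂)
  rcases mem_insert.1 hu with rfl | hu
  · rcases mem_insert.1 hw with rfl | hw
    · exact absurd hnu ((hU.1 D hD).2 u (by rwa [neg_neg] at hnw))
    · exact ⟨w, hw, hnw⟩
  · exact ⟨u, hu, hnu⟩

lemma insert_ne_insert_neg (hU : UHit F) (h₁ : insert x E ∈ F) (hEF : E ∉ F) :
    insert x E ≠ insert (-x) E := by
  have hx := (hU.1 _ h₁).ne_zero (mem_insert_self x E)
  have hxE : x ∉ E := fun h => hEF (by rwa [insert_eq_of_mem h] at h₁)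
  intro h
  rcases mem_insert.1 (h ▸ mem_insert_self x E) with h | h
  · omega
  · exact hxE h

lemma degOneLits_fsResolve_subset (hU : UHit F) (hns : Nonsingular F)
    (h₁ : insert x E ∈ F) (h₂ : insert (-x) E ∈ F) (hEF : E ∉ F) :
    degOneLits (fsResolve F E x) ⊆
      insert x (insert (-x) ((insert x E ∩ insert (-x) E).filter (fun z => ldeg F z = 2))) := by
  have hF' : fsResolve F E x = insert E ((F.erase (insert (-x) E)).erase (insert x E)) := by
    rw [fsResolve, union_singleton, sdiff_insert, sdiff_singleton_eq_erase]
  intro z hz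
  rw [mem_degOneLits, hF', ldeg_insert (fun h => hEF (mem_of_mem_erase (mem_of_mem_erase h)))] at hz
  have hdeg := ldeg_erase h₂ z
  rw [ldeg_erase (mem_erase.2 ⟨hU.insert_ne_insert_neg h₁ hEF, h₁⟩) z] at hdeg
  simp only [mem_insert, mem_filter, mem_inter]
  by_cases hzx : z = x
  · exact Or.inl hzx
  by_cases hznx : z = -x
  · exact Or.inr (Or.inl hznx)
  simp only [mem_insert, hzx, hznx, false_or] at hdeg ⊢
  by_cases hzE : z ∈ E
  · simp only [hzE, if_true] at hz hdeg
    exact ⟨⟨hzE, hzE⟩, by omega⟩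
  · simp only [hzE, if_false] at hz hdeg
    obtain ⟨W, hW, hzW⟩ := ldeg_pos_iff.1 (show 0 < ldeg F z by omega)
    have := hU.two_le_ldeg hns hW hzW
    omega

lemma card_degOneLits_fsResolve_le (hU : UHit F) (hns : Nonsingular F)
    (h₁ : insert x E ∈ F) (h₂ : insert (-x) E ∈ F) (hEF : E ∉ F) :
    (degOneLits (fsResolve F E x)).card ≤ 3 := by
  have hN := hU.card_filter_ldeg_eq_two_le_one h₁ h₂ (hU.insert_ne_insert_neg h₁ hEF)
  refine ((card_le_card (hU.degOneLits_fsResolve_subset hns h₁ h₂ hEF)).trans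
    (card_insert_le _ _)).trans ?_
  have := card_insert_le (-x) ((insert x E ∩ insert (-x) E).filter (fun z => ldeg F z = 2))
  omega

end UHit

lemma uHit_fsResolve (hU : UHit F) (h₁ : insert x E ∈ F) (h₂ : insert (-x) E ∈ F) :
    UHit (fsResolve F E x) := by
  have hmem : ∀ {W}, W ∈ fsResolve F E x ↔
      (W ∈ F ∧ W ≠ insert x E ∧ W ≠ insert (-x) E) ∨ W = E := by
    simp [fsResolve, or_comm]
  refine ⟨fun W hW => ?_, fun W₁ hW₁ W₂ hW₂ hne => ?_, fun ⟨S, hS, hmeet⟩ => ?_⟩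
  · rcases hmem.1 hW with ⟨hW, -⟩ | rfl
    · exact hU.1 W hW
    · exact (hU.1 _ h₁).mono (subset_insert _ _)
  · rcases hmem.1 hW₁ with ⟨hF₁, hne₁⟩ | rfl <;> rcases hmem.1 hW₂ with ⟨hF₂, hne₂⟩ | rfl
    · exact hU.2.1 W₁ hF₁ W₂ hF₂ hne
    · obtain ⟨u, hu, hnu⟩ := hU.exists_neg_mem_of_fsPair h₁ h₂ hF₁ hne₁.1 hne₁.2
      exact ⟨-u, hnu, by rwa [neg_neg]⟩
    · exact hU.exists_neg_mem_of_fsPair h₁ h₂ hF₂ hne₂.1 hne₂.2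
    · exact absurd rfl hne
  · refine hU.2.2 ⟨S, hS, fun D hD => ?_⟩
    have hSE : (S ∩ E).Nonempty := hmeet E (hmem.2 (Or.inr rfl))
    by_cases hD₁ : D = insert x E
    · exact hSE.mono (inter_subset_inter_left (hD₁ ▸ subset_insert _ _))
    by_cases hD₂ : D = insert (-x) E
    · exact hSE.mono (inter_subset_inter_left (hD₂ ▸ subset_insert _ _))
    exact hmeet D (hmem.2 (Or.inl ⟨hD, hD₁, hD₂⟩))

end FsResolve

theorem stmt9_general (F : Cls) (hU : UHit F) (hns : Nonsingular F)
    (E : Finset ℤ) (x : ℤ)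
    (h1 : insert x E ∈ F) (h2 : insert (-x) E ∈ F) (hEF : E ∉ F) :
    UHit ((F \ {insert x E, insert (-x) E}) ∪ {E}) ∧
    ∀ (m : ℕ) (Fs : ℕ → Cls), Fs 0 = (F \ {insert x E, insert (-x) E}) ∪ {E} →
      (∀ i < m, ∃ v, SingularVar (Fs i) v ∧ Fs (i + 1) = dp v (Fs i)) →
      Nonsingular (Fs m) → m ≤ 3 := by
  have hU' := uHit_fsResolve hU h1 h2
  refine ⟨hU', fun m Fs h0 hFs _ => ?_⟩
  have hU₀ : UHit (Fs 0) := by rw [h0]; exact hU'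
  have hlen := IsSingularDPSeq.length_le_card_degOneLits hFs hU₀
  rw [h0] at hlen
  exact hlen.trans (hU.card_degOneLits_fsResolve_le hns h1 h2 hEF)

/-- fs-resolution on a nonsingular UHIT yields a UHIT from which every singular
DP-sequence ending nonsingularly has length at most 3. -/
theorem stmt9 (F : Cls) (hU : UHit F) (hns : Nonsingular F)
    (E : Finset ℤ) (x : ℤ) (hE : IsClause E) (hx : x ≠ 0) (hxE : x ∉ E) (hxE' : -x ∉ E)
    (h1 : insert x E ∈ F) (h2 : insert (-x) E ∈ F) (hEF : E ∉ F) :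
    UHit ((F \ {insert x E, insert (-x) E}) ∪ {E}) ∧
    ∀ (m : ℕ) (Fs : ℕ → Cls), Fs 0 = (F \ {insert x E, insert (-x) E}) ∪ {E} →
      (∀ i < m, ∃ v, SingularVar (Fs i) v ∧ Fs (i + 1) = dp v (Fs i)) →
      Nonsingular (Fs m) → m ≤ 3 :=
  stmt9_general F hU hns E x h1 h2 hEF
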